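/- There is a bijection between unbalanced minimal set covers of an n-element set and minimal set covers of sets with t elements for 0 ≤ t ≤ n − 1 (i.e., minimal set covers of ground sets of size at most n − 1), up to isomorphism. -/

import Mathlib

/-!
If `Y` is an unbalanced member of a minimal cover `C` of `V`, counting forces every other
member to meet `Yᶜ` in exactly one point, which is loyal to it: `Yᶜ` is a choice of one loyal
point for each member of `C \ {Y}`. Deleting `Y` and restricting the remaining members to their
union thus gives a minimal cover of a smaller set, and `C` is recovered from `C \ {Y}` by any
choice of loyal points. Two such choices differ by a permutation fixing every member (swap the
loyal points one member at a time), and two unbalanced members of `C` are exchanged by a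
transposition preserving `C`; so both constructions are well defined up to isomorphism, and
they are mutually inverse.
-/

/-- `C` is a set cover of the finite type `V`: the union of its members is all of `V`. -/
def IsSetCover {V : Type*} [Fintype V] (C : Finset (Finset V)) : Prop :=
  ∀ v : V, ∃ A ∈ C, v ∈ A

/-- A set cover is minimal if no member is contained in the union of the remaining members. -/
def IsMinimalCover {V : Type*} [DecidableEq V] (C : Finset (Finset V)) : Prop :=
  ∀ A ∈ C, ¬ A ⊆ (C.erase A).sup id

/-- A vertex is loyal if it belongs to exactly one member of `C`. -/
def Loyal {V : Type*} (C : Finset (Finset V)) (v : V) : Prop :=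
  ∃! A : Finset V, A ∈ C ∧ v ∈ A

/-- A minimal set cover of `Fin n` is unbalanced if it contains a member of size
`n − |C| + 1`. -/
def UnbalancedCover (n : ℕ) (C : Finset (Finset (Fin n))) : Prop :=
  ∃ Y ∈ C, (Y.card : ℤ) = (n : ℤ) - C.card + 1

/-- Isomorphism of unbalanced minimal set covers of `Fin n`. -/
def UCoverRel (n : ℕ)
    (C D : {C : Finset (Finset (Fin n)) //
      IsSetCover C ∧ IsMinimalCover C ∧ UnbalancedCover n C}) : Prop :=
  ∃ σ : Equiv.Perm (Fin n), C.1.image (fun A => A.image σ) = D.1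

/-- Isomorphism of minimal set covers on ground sets of size `t ≤ n − 1`:
a bijection of ground sets carrying one collection onto the other. -/
def SmallCoverRel (n : ℕ)
    (C D : Σ t : Fin n,
      {C : Finset (Finset (Fin t.val)) // IsSetCover C ∧ IsMinimalCover C}) : Prop :=
  ∃ σ : Fin C.1.val ≃ Fin D.1.val, C.2.1.image (fun A => A.image σ) = D.2.1

open Finset Function Equiv

theorem Quot.nonempty_equiv_of_forall_iff {α β : Type*} {r : α → α → Prop}
    {s : β → β → Prop} (R : α → β → Prop) (hr : ∀ a, r a a) (hs : ∀ b, s b b)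
    (hα : ∀ a, ∃ b, R a b) (hβ : ∀ b, ∃ a, R a b)
    (hR : ∀ a a' b b', R a b → R a' b' → (r a a' ↔ s b b')) :
    Nonempty (Quot r ≃ Quot s) := by
  choose f hf using hα
  choose g hg using hβ
  exact ⟨{
    toFun := Quot.lift (fun a => Quot.mk s (f a))
      fun a a' h => Quot.sound ((hR a a' _ _ (hf a) (hf a')).1 h)
    invFun := Quot.lift (fun b => Quot.mk r (g b))
      fun b b' h => Quot.sound ((hR _ _ b b' (hg b) (hg b')).2 h)
    left_inv := Quot.ind fun a => Quot.sound ((hR _ _ _ _ (hg (f a)) (hf a)).2 (hs _))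
    right_inv := Quot.ind fun b => Quot.sound ((hR _ _ _ _ (hf (g b)) (hg b)).1 (hr _)) }⟩

namespace Finset

variable {α : Type*} [DecidableEq α] {s t : Finset α} {a b x : α}

theorem mem_image_swap : x ∈ s.image (swap a b) ↔ swap a b x ∈ s := by
  rw [← coe_toEmbedding, ← map_eq_image, mem_map_equiv, symm_swap]
  rfl

theorem image_swap_of_mem_iff (h : a ∈ s ↔ b ∈ s) : s.image (swap a b) = s := by
  ext x
  rw [mem_image_swap, swap_apply_def]
  grind

theorem image_swap_of_sdiff_eq (h₁ : s \ t = {a}) (h₂ : t \ s = {b}) :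
    s.image (swap a b) = t := by
  ext x
  simp only [Finset.ext_iff, mem_sdiff, mem_singleton] at h₁ h₂
  rw [mem_image_swap, swap_apply_def]
  grind

theorem image_perm_compl [Fintype α] (σ : Perm α) (s : Finset α) :
    sᶜ.image σ = (s.image σ)ᶜ := by
  simp [compl_eq_univ_sdiff, image_sdiff _ _ σ.injective]

end Finset

theorem Function.Embedding.exists_perm_comp_eq {V W W' : Type*} [Finite V] (τ : W ≃ W')
    (f : W ↪ V) (f' : W' ↪ V) : ∃ σ : Perm V, ⇑σ ∘ f = f' ∘ τ := by
  classical
  let e : Set.range f ≃ Set.range f' :=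
    (Equiv.ofInjective f f.injective).symm.trans (τ.trans (Equiv.ofInjective f' f'.injective))
  refine ⟨e.extendSubtype, funext fun w => ?_⟩
  rw [comp_apply, extendSubtype_apply_of_mem e _ ⟨w, rfl⟩]
  simp [e]

theorem Loyal.eq_of_mem {V : Type*} {C : Finset (Finset V)} {v : V} {A B : Finset V}
    (h : Loyal C v) (hA : A ∈ C) (hvA : v ∈ A) (hB : B ∈ C) (hvB : v ∈ B) : A = B :=
  h.unique ⟨hA, hvA⟩ ⟨hB, hvB⟩

theorem Loyal.mono {V : Type*} {C D : Finset (Finset V)} {v : V} {A : Finset V}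
    (h : Loyal C v) (hDC : D ⊆ C) (hA : A ∈ D) (hvA : v ∈ A) : Loyal D v :=
  ⟨A, ⟨hA, hvA⟩, fun _ hB => h.unique ⟨hDC hB.1, hB.2⟩ ⟨hDC hA, hvA⟩⟩

theorem IsSetCover.sup_eq_univ {V : Type*} [Fintype V] [DecidableEq V]
    {C : Finset (Finset V)} (hC : IsSetCover C) : C.sup id = univ :=
  eq_univ_of_forall fun v => mem_sup.2 (hC v)

theorem unbalancedCover_iff {n : ℕ} {C : Finset (Finset (Fin n))} :
    UnbalancedCover n C ↔ ∃ Y ∈ C, #Y + #C = n + 1 :=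
  exists_congr fun _ => and_congr_right fun _ => by omega

namespace IsMinimalCover

variable {V : Type*} [DecidableEq V] {C D : Finset (Finset V)} {A : Finset V}

theorem mono (hC : IsMinimalCover C) (hDC : D ⊆ C) : IsMinimalCover D :=
  fun A hA hsub => hC A (hDC hA) (hsub.trans (sup_mono (erase_subset_erase A hDC)))

theorem nonempty_of_mem (hC : IsMinimalCover C) (hA : A ∈ C) : A.Nonempty := by
  rw [nonempty_iff_ne_empty]
  rintro rfl
  exact hC ∅ hA (empty_subset _)

theorem exists_loyal (hC : IsMinimalCover C) (hA : A ∈ C) : ∃ v ∈ A, Loyal C v := by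
  obtain ⟨v, hvA, hv⟩ := not_subset.1 (hC A hA)
  refine ⟨v, hvA, A, ⟨hA, hvA⟩, fun B ⟨hB, hvB⟩ => ?_⟩
  by_contra hBA
  exact hv (mem_sup.2 ⟨B, mem_erase.2 ⟨hBA, hB⟩, hvB⟩)

end IsMinimalCover

namespace SetCover

section Relabel

variable {V W W' : Type*} [DecidableEq V] {f : W → V} {D : Finset (Finset W)} {A : Finset W}

def relabel (f : W → V) (D : Finset (Finset W)) : Finset (Finset V) :=
  D.image (fun A => A.image f)

def CoverIso [DecidableEq W] (C : Finset (Finset V)) (D : Finset (Finset W)) : Prop :=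
  ∃ σ : V ≃ W, relabel σ C = D

theorem relabel_id (C : Finset (Finset V)) : relabel id C = C := by
  simp [relabel]

theorem CoverIso.refl (C : Finset (Finset V)) : CoverIso C C :=
  ⟨Equiv.refl V, relabel_id C⟩

theorem relabel_relabel [DecidableEq W'] (g : V → W') (f : W → V) (D : Finset (Finset W)) :
    relabel g (relabel f D) = relabel (g ∘ f) D := by
  simp only [relabel, image_image, comp_def]

theorem image_mem_relabel (f : W → V) (hA : A ∈ D) : A.image f ∈ relabel f D :=
  mem_image_of_mem _ hA

theorem relabel_injective (hf : Injective f) : Injective (relabel f) :=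
  image_injective (image_injective hf)

theorem card_relabel (hf : Injective f) (D : Finset (Finset W)) : #(relabel f D) = #D :=
  card_image_of_injective _ (image_injective hf)

theorem relabel_eq_self {f : V → V} {C : Finset (Finset V)} (h : ∀ A ∈ C, A.image f = A) :
    relabel f C = C :=
  (image_congr h).trans image_id

variable [DecidableEq W]

theorem relabel_erase (hf : Injective f) (D : Finset (Finset W)) (A : Finset W) :
    relabel f (D.erase A) = (relabel f D).erase (A.image f) :=
  image_erase (image_injective hf) D A

theorem relabel_insert (f : W → V) (A : Finset W) (D : Finset (Finset W)) :
    relabel f (insert A D) = insert (A.image f) (relabel f D) :=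
  image_insert _ _ _

theorem sup_relabel (f : W → V) (D : Finset (Finset W)) :
    (relabel f D).sup id = (D.sup id).image f := by
  induction D using Finset.induction_on with
  | empty => simp [relabel]
  | insert A D _ ih => simp [relabel_insert, ih, image_union]

theorem isMinimalCover_relabel_iff (hf : Injective f) :
    IsMinimalCover (relabel f D) ↔ IsMinimalCover D := by
  refine forall_mem_image.trans (forall₂_congr fun A _ => ?_)
  rw [← relabel_erase hf, sup_relabel, image_subset_image_iff hf]

theorem exists_equiv_relabel_eq_of_relabel_eq [DecidableEq W'] [Fintype W] [Fintype W']
    {D' : Finset (Finset W')} (hD : IsSetCover D) (hD' : IsSetCover D') (f : W ↪ V)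
    (f' : W' ↪ V) (h : relabel f D = relabel f' D') : ∃ τ : W ≃ W', relabel τ D = D' := by
  have hrange : Set.range f = Set.range f' := by
    have := congrArg (fun E => ((E.sup id : Finset V) : Set V)) h
    simpa [sup_relabel, hD.sup_eq_univ, hD'.sup_eq_univ] using this
  let τ := (Equiv.ofInjective f f.injective).trans
    ((Equiv.setCongr hrange).trans (Equiv.ofInjective f' f'.injective).symm)
  have hτ : ⇑f' ∘ τ = f := funext fun w => by simp [τ, apply_ofInjective_symm]
  refine ⟨τ, relabel_injective f'.injective ?_⟩
  rw [relabel_relabel, hτ, h]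

end Relabel

section LoyalChoice

variable {V : Type*}

def IsLoyalChoice (C : Finset (Finset V)) (p : Finset V → V) : Prop :=
  ∀ A ∈ C, p A ∈ A ∧ Loyal C (p A)

theorem _root_.IsMinimalCover.exists_isLoyalChoice [DecidableEq V] [Nonempty V]
    {C : Finset (Finset V)} (hC : IsMinimalCover C) : ∃ p, IsLoyalChoice C p := by
  choose! p hp using fun A (hA : A ∈ C) => hC.exists_loyal hA
  exact ⟨p, hp⟩

namespace IsLoyalChoice

variable {C E : Finset (Finset V)} {p q : Finset V → V} {A B Y : Finset V}

theorem eq_of_mem (hp : IsLoyalChoice C p) (hA : A ∈ C) (hB : B ∈ C) (h : p A ∈ B) : B = A :=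
  (hp A hA).2.eq_of_mem hB h hA (hp A hA).1

theorem mono (hp : IsLoyalChoice C p) (hEC : E ⊆ C) : IsLoyalChoice E p :=
  fun A hA => ⟨(hp A (hEC hA)).1, (hp A (hEC hA)).2.mono hEC hA (hp A (hEC hA)).1⟩

variable [DecidableEq V]

theorem card_image (hp : IsLoyalChoice C p) : #(C.image p) = #C :=
  card_image_of_injOn fun A hA _ hB h => hp.eq_of_mem hB hA (h ▸ (hp A hA).1)

theorem sdiff_eq_singleton [Fintype V] (hp : IsLoyalChoice E p) (hY : E.image p = Yᶜ)
    (hA : A ∈ E) : A \ Y = {p A} := by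
  ext x
  simp only [mem_sdiff, mem_singleton]
  constructor
  · rintro ⟨hxA, hxY⟩
    obtain ⟨B, hB, rfl⟩ := mem_image.1 (hY ▸ mem_compl.2 hxY)
    rw [hp.eq_of_mem hB hA hxA]
  · rintro rfl
    exact ⟨(hp A hA).1, mem_compl.1 (hY ▸ mem_image_of_mem p hA)⟩

theorem exists_perm (hp : IsLoyalChoice E p) (hq : IsLoyalChoice E q) :
    ∃ ρ : Perm V, (∀ B ∈ E, B.image ρ = B) ∧ ∀ B ∈ E, ρ (p B) = q B := by
  suffices ∀ D ⊆ E, ∃ ρ : Perm V, (∀ B ∈ E, B.image ρ = B) ∧ ∀ B ∈ D, ρ (p B) = q B from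
    this E subset_rfl
  intro D
  induction D using Finset.induction_on with
  | empty => exact fun _ => ⟨1, by simp, by simp⟩
  | insert A D hAD ih =>
    intro hAD'
    obtain ⟨ρ, hρE, hρD⟩ := ih ((subset_insert A D).trans hAD')
    have hA := hAD' (mem_insert_self A D)
    have hρ_mem_iff : ∀ B ∈ E, ∀ x, ρ x ∈ B ↔ x ∈ B := fun B hB x => by
      conv_lhs => rw [← hρE B hB]
      exact ρ.injective.mem_finset_image
    -- `ρ` may move `p A` inside `A`, so the swap goes from `ρ (p A)` rather than from `p A`.
    refine ⟨swap (ρ (p A)) (q A) * ρ, fun B hB => ?_, ?_⟩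
    · rw [Perm.coe_mul, ← image_image, hρE B hB]
      refine image_swap_of_mem_iff ?_
      rw [hρ_mem_iff B hB]
      exact ⟨fun h => hp.eq_of_mem hA hB h ▸ (hq A hA).1,
        fun h => hq.eq_of_mem hA hB h ▸ (hp A hA).1⟩
    · intro B hB
      rcases mem_insert.1 hB with rfl | hBD
      · simp
      have hBE := hAD' (mem_insert_of_mem hBD)
      have hBA : B ≠ A := fun h => hAD (h ▸ hBD)
      rw [Perm.mul_apply, hρD B hBD]
      refine swap_apply_of_ne_of_ne (fun h => hBA ?_) (fun h => hBA ?_)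
      · exact (hq.eq_of_mem hBE hA (by rw [h]; exact (hρ_mem_iff A hA _).2 (hp A hA).1)).symm
      · exact (hq.eq_of_mem hBE hA (by rw [h]; exact (hq A hA).1)).symm

theorem isSetCover_insert_compl [Fintype V] (hp : IsLoyalChoice E p) :
    IsSetCover (insert (E.image p)ᶜ E) := by
  intro x
  by_cases hx : x ∈ E.image p
  · obtain ⟨B, hB, rfl⟩ := mem_image.1 hx
    exact ⟨B, mem_insert_of_mem hB, (hp B hB).1⟩
  · exact ⟨_, mem_insert_self _ _, mem_compl.2 hx⟩

theorem mem_compl_image [Fintype V] (hp : IsLoyalChoice E p) {w : V} (hw : ∀ B ∈ E, w ∉ B) :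
    w ∈ (E.image p)ᶜ :=
  mem_compl.2 fun h =>
    let ⟨B, hB, hpB⟩ := mem_image.1 h
    hw B hB (hpB ▸ (hp B hB).1)

theorem compl_image_notMem [Fintype V] (hp : IsLoyalChoice E p) {w : V}
    (hw : ∀ B ∈ E, w ∉ B) : (E.image p)ᶜ ∉ E :=
  fun h => hw _ h (hp.mem_compl_image hw)

theorem isMinimalCover_insert_compl [Fintype V] (hp : IsLoyalChoice E p) {w : V}
    (hw : ∀ B ∈ E, w ∉ B) : IsMinimalCover (insert (E.image p)ᶜ E) := by
  have hwY := hp.mem_compl_image hw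
  have hYE := hp.compl_image_notMem hw
  intro A hA hsub
  rcases mem_insert.1 hA with rfl | hAE
  · rw [erase_insert hYE] at hsub
    obtain ⟨B, hB, hwB⟩ := mem_sup.1 (hsub hwY)
    exact hw B hB hwB
  · obtain ⟨B, hB, hpB⟩ := mem_sup.1 (hsub (hp A hAE).1)
    obtain ⟨hBA, hB⟩ := mem_erase.1 hB
    rcases mem_insert.1 hB with rfl | hBE
    · exact mem_compl.1 hpB (mem_image_of_mem p hAE)
    · exact hBA (hp.eq_of_mem hAE hBE hpB)

end IsLoyalChoice

end LoyalChoice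

section Unbalanced

variable {V W W' : Type*} [DecidableEq V] [Fintype V] {C C' : Finset (Finset V)}
  {Y Y' : Finset V}

theorem _root_.IsMinimalCover.exists_isLoyalChoice_image_eq_compl (hC : IsMinimalCover C)
    (hY : Y ∈ C) (hcard : #Y + #C = Fintype.card V + 1) :
    ∃ p, IsLoyalChoice (C.erase Y) p ∧ (C.erase Y).image p = Yᶜ := by
  obtain ⟨y, -⟩ := hC.nonempty_of_mem hY
  have : Nonempty V := ⟨y⟩
  obtain ⟨p, hp⟩ := hC.exists_isLoyalChoice
  have hpE := hp.mono (erase_subset Y C)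
  refine ⟨p, hpE, eq_of_subset_of_card_le ?_ ?_⟩
  · intro x hx
    obtain ⟨A, hA, rfl⟩ := mem_image.1 hx
    exact mem_compl.2 fun hpY =>
      (mem_erase.1 hA).1 (hp.eq_of_mem (mem_of_mem_erase hA) hY hpY).symm
  · rw [card_compl, hpE.card_image, card_erase_of_mem hY]
    omega

theorem _root_.IsMinimalCover.exists_perm_relabel_eq_self {Y₁ Y₂ : Finset V}
    (hC : IsMinimalCover C) (hY₁ : Y₁ ∈ C) (hY₂ : Y₂ ∈ C)
    (hcard₁ : #Y₁ + #C = Fintype.card V + 1) (hcard₂ : #Y₂ + #C = Fintype.card V + 1) :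
    ∃ ρ : Perm V, relabel ρ C = C ∧ Y₁.image ρ = Y₂ := by
  rcases eq_or_ne Y₁ Y₂ with rfl | hne
  · exact ⟨1, relabel_eq_self (by simp), by simp⟩
  obtain ⟨p₁, hp₁, hp₁Y⟩ := hC.exists_isLoyalChoice_image_eq_compl hY₁ hcard₁
  obtain ⟨p₂, hp₂, hp₂Y⟩ := hC.exists_isLoyalChoice_image_eq_compl hY₂ hcard₂
  have h₂₁ : Y₂ ∈ C.erase Y₁ := mem_erase.2 ⟨hne.symm, hY₂⟩
  have h₁₂ : Y₁ ∈ C.erase Y₂ := mem_erase.2 ⟨hne, hY₁⟩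
  have hsdiff₁ := hp₂.sdiff_eq_singleton hp₂Y h₁₂
  have hsdiff₂ := hp₁.sdiff_eq_singleton hp₁Y h₂₁
  refine ⟨swap (p₂ Y₁) (p₁ Y₂), eq_of_subset_of_card_le (image_subset_iff.2 fun B hB => ?_)
    (card_relabel (Equiv.injective _) C).ge, image_swap_of_sdiff_eq hsdiff₁ hsdiff₂⟩
  rcases eq_or_ne B Y₁ with rfl | hB₁
  · rwa [image_swap_of_sdiff_eq hsdiff₁ hsdiff₂]
  rcases eq_or_ne B Y₂ with rfl | hB₂
  · rwa [swap_comm, image_swap_of_sdiff_eq hsdiff₂ hsdiff₁]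
  rwa [image_swap_of_mem_iff (iff_of_false
    (fun h => hB₁ (hp₂.eq_of_mem h₁₂ (mem_erase.2 ⟨hB₂, hB⟩) h))
    (fun h => hB₂ (hp₁.eq_of_mem h₂₁ (mem_erase.2 ⟨hB₁, hB⟩) h)))]

theorem _root_.IsMinimalCover.exists_perm_relabel_eq_of_erase_eq (hC : IsMinimalCover C)
    (hC' : IsMinimalCover C') (hY : Y ∈ C) (hY' : Y' ∈ C')
    (hcard : #Y + #C = Fintype.card V + 1) (hcard' : #Y' + #C' = Fintype.card V + 1)
    (h : C.erase Y = C'.erase Y') : ∃ ρ : Perm V, relabel ρ C = C' := by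
  obtain ⟨p, hp, hpY⟩ := hC.exists_isLoyalChoice_image_eq_compl hY hcard
  obtain ⟨q, hq, hqY⟩ := hC'.exists_isLoyalChoice_image_eq_compl hY' hcard'
  rw [h] at hp hpY
  obtain ⟨ρ, hρE, hρpq⟩ := hp.exists_perm hq
  have hρY : Y.image ρ = Y' := by
    rw [← compl_compl Y, ← compl_compl Y', ← hpY, ← hqY, image_perm_compl, image_image]
    exact congrArg _ (image_congr hρpq)
  refine ⟨ρ, ?_⟩
  rw [← insert_erase hY, ← insert_erase hY', relabel_insert, hρY, h, relabel_eq_self hρE]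

/-- The correspondence behind the bijection: `D`, embedded into `V`, is what remains of `C`
after deleting an unbalanced member. -/
def IsReduction (C : Finset (Finset V)) (D : Finset (Finset W)) : Prop :=
  ∃ Y ∈ C, #Y + #C = Fintype.card V + 1 ∧ ∃ e : W ↪ V, C.erase Y = relabel e D

theorem IsReduction.coverIso_iff [DecidableEq W] [DecidableEq W'] [Fintype W] [Fintype W']
    {D : Finset (Finset W)} {D' : Finset (Finset W')} (hC : IsMinimalCover C)
    (hC' : IsMinimalCover C') (hD : IsSetCover D) (hD' : IsSetCover D')
    (h : IsReduction C D) (h' : IsReduction C' D') : CoverIso C C' ↔ CoverIso D D' := by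
  obtain ⟨Y, hY, hcard, e, hE⟩ := h
  obtain ⟨Y', hY', hcard', e', hE'⟩ := h'
  constructor
  · rintro ⟨σ, rfl⟩
    obtain ⟨ρ, hρC, hρY⟩ := hC'.exists_perm_relabel_eq_self (image_mem_relabel σ hY) hY'
      (by rwa [card_image_of_injective _ σ.injective, card_relabel σ.injective]) hcard'
    have hπ : relabel (σ.trans ρ) (C.erase Y) = (relabel σ C).erase Y' := by
      rw [coe_trans, ← relabel_relabel, relabel_erase σ.injective, relabel_erase ρ.injective,
        hρC, hρY]
    rw [hE, hE', relabel_relabel] at hπ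
    exact exists_equiv_relabel_eq_of_relabel_eq hD hD' (e.trans (σ.trans ρ).toEmbedding) e' hπ
  · rintro ⟨τ, rfl⟩
    obtain ⟨σ, hσ⟩ := e.exists_perm_comp_eq τ e'
    have hσC : (relabel σ C).erase (Y.image σ) = C'.erase Y' := by
      rw [← relabel_erase σ.injective, hE, hE', relabel_relabel, relabel_relabel, hσ]
    have hσmin := (isMinimalCover_relabel_iff σ.injective).2 hC
    obtain ⟨ρ, hρ⟩ := hσmin.exists_perm_relabel_eq_of_erase_eq hC' (image_mem_relabel σ hY) hY'
      (by rwa [card_image_of_injective _ σ.injective, card_relabel σ.injective]) hcard' hσC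
    exact ⟨σ.trans ρ, by rw [coe_trans, ← relabel_relabel, hρ]⟩

theorem _root_.IsMinimalCover.exists_isReduction (hC : IsMinimalCover C) (hY : Y ∈ C)
    (hcard : #Y + #C = Fintype.card V + 1) :
    ∃ t < Fintype.card V, ∃ D : Finset (Finset (Fin t)),
      IsSetCover D ∧ IsMinimalCover D ∧ IsReduction C D := by
  set Z := (C.erase Y).sup id
  let e : Fin (Fintype.card Z) ↪ V :=
    (Fintype.equivFin Z).symm.toEmbedding.trans (Embedding.subtype _)
  have he : ∀ i, e i ∈ Z := fun i => ((Fintype.equivFin Z).symm i).2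
  have he_surj : ∀ x ∈ Z, ∃ i, e i = x := fun x hx =>
    ⟨Fintype.equivFin Z ⟨x, hx⟩, by simp [e]⟩
  let D := (C.erase Y).image fun A => univ.filter (e · ∈ A)
  have hED : relabel e D = C.erase Y := by
    rw [relabel, image_image]
    refine (image_congr fun A hA => ?_).trans image_id
    ext x
    simp only [comp_apply, mem_image, mem_filter, mem_univ, true_and, id]
    exact ⟨fun ⟨i, hi, hix⟩ => hix ▸ hi,
      fun hx => let ⟨i, hi⟩ := he_surj x (mem_sup.2 ⟨A, hA, hx⟩); ⟨i, hi ▸ hx, hi⟩⟩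
  obtain ⟨y, -, hyZ⟩ := not_subset.1 (hC Y hY)
  refine ⟨Fintype.card Z, ?_, D, fun i => ?_, ?_, Y, hY, hcard, e, hED.symm⟩
  · rw [Fintype.card_coe]
    exact card_lt_univ_of_notMem hyZ
  · obtain ⟨A, hA, hiA⟩ := mem_sup.1 (he i)
    exact ⟨_, mem_image_of_mem _ hA, by simpa using hiA⟩
  · rw [← isMinimalCover_relabel_iff e.injective, hED]
    exact hC.mono (erase_subset Y C)

theorem _root_.IsMinimalCover.exists_isReduction_of_card_lt [DecidableEq W] [Fintype W]
    {D : Finset (Finset W)} (hD : IsMinimalCover D) (hcard : Fintype.card W < Fintype.card V) :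
    ∃ C : Finset (Finset V), IsSetCover C ∧ IsMinimalCover C ∧ IsReduction C D := by
  obtain ⟨e⟩ := Embedding.nonempty_of_card_le hcard.le
  have : Nonempty V := Fintype.card_pos_iff.1 (by omega)
  set E := relabel e D
  obtain ⟨p, hp⟩ := ((isMinimalCover_relabel_iff e.injective).2 hD).exists_isLoyalChoice
  obtain ⟨w, hw⟩ : ∃ w, w ∉ Set.range e := by
    by_contra! h
    exact hcard.not_ge (Fintype.card_le_of_surjective e h)
  have hwE : ∀ B ∈ E, w ∉ B := by
    intro B hB hwB
    obtain ⟨A, -, rfl⟩ := mem_image.1 hB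
    obtain ⟨v, -, rfl⟩ := mem_image.1 hwB
    exact hw ⟨v, rfl⟩
  refine ⟨insert (E.image p)ᶜ E, hp.isSetCover_insert_compl, hp.isMinimalCover_insert_compl hwE,
    _, mem_insert_self _ _, ?_, e, erase_insert (hp.compl_image_notMem hwE)⟩
  have := card_le_univ (E.image p)
  rw [card_compl, card_insert_of_notMem (hp.compl_image_notMem hwE), hp.card_image] at *
  omega

end Unbalanced

end SetCover

/-- Compilation theorem for minimal set covers: there is a bijection between
isomorphism classes of unbalanced minimal set covers of an `n`-set and isomorphism
classes of minimal set covers of sets with `t` elements, `0 ≤ t ≤ n − 1`. -/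
theorem cover_compilation (n : ℕ) :
    Nonempty (Quot (UCoverRel n) ≃ Quot (SmallCoverRel n)) := by
  refine Quot.nonempty_equiv_of_forall_iff (fun C D => SetCover.IsReduction C.1 D.2.1)
    (fun C => SetCover.CoverIso.refl C.1) (fun D => SetCover.CoverIso.refl D.2.1) ?_ ?_ ?_
  · rintro ⟨C, -, hC, hY⟩
    obtain ⟨Y, hY, hcard⟩ := unbalancedCover_iff.1 hY
    obtain ⟨t, ht, D, hD, hDmin, hR⟩ := hC.exists_isReduction hY (by simpa using hcard)
    exact ⟨⟨⟨t, by simpa using ht⟩, D, hD, hDmin⟩, hR⟩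
  · rintro ⟨t, D, -, hD⟩
    obtain ⟨C, hC, hCmin, hR⟩ := hD.exists_isReduction_of_card_lt (V := Fin n) (by simp)
    refine ⟨⟨C, hC, hCmin, ?_⟩, hR⟩
    obtain ⟨Y, hY, hcard, -⟩ := hR
    exact unbalancedCover_iff.2 ⟨Y, hY, by simpa using hcard⟩
  · rintro ⟨C, _, hC, _⟩ ⟨C', _, hC', _⟩ ⟨t, D, hD, _⟩ ⟨t', D', hD', _⟩ h h'
    exact SetCover.IsReduction.coverIso_iff hC hC' hD hD' h h'
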